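/- arXiv:2605.01760 — 2 statements merged into one kernel-verified Lean document; each statement's English description precedes it below -/
import Mathlib

section
/- Let G be a connected finite simple graph, let uv be a non-edge of G, set a = d_G(u) and b = d_G(v), and assume all roots of LM_G and of LM_{G+uv} are real. Suppose two-place LMRIV occurs when uv is added, with changed roots λ and μ where λ is the largest root of LM_G: that is, the multiset of real roots of LM_{G+uv} equals the multiset of roots of LM_G with one copy each of λ and μ removed and λ+1 and μ+1 added. Then λ + μ = a + b + 1 and λ·μ = a·b. -/
open Polynomial Finset

namespace LMRIV

open scoped Classical

variable {V : Type*}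

/-- The degree of a vertex. -/
noncomputable def deg [Fintype V] (G : SimpleGraph V) (v : V) : ℕ :=
  (univ.filter fun w => G.Adj v w).card

/-- The finset of edges of `G`. -/
noncomputable def edges [Fintype V] (G : SimpleGraph V) : Finset (Sym2 V) :=
  univ.filter fun e => e ∈ G.edgeSet

/-- A matching: a set of pairwise disjoint edges. -/
def IsMatching (G : SimpleGraph V) (M : Finset (Sym2 V)) : Prop :=
  (↑M : Set (Sym2 V)) ⊆ G.edgeSet ∧
    ∀ e ∈ M, ∀ f ∈ M, e ≠ f → ∀ x : V, x ∈ e → x ∉ f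

/-- The finset of all matchings of `G` (including the empty matching). -/
noncomputable def matchings [Fintype V] (G : SimpleGraph V) : Finset (Finset (Sym2 V)) :=
  univ.filter fun M => IsMatching G M

/-- The set of vertices covered by a matching. -/
noncomputable def covered [Fintype V] (M : Finset (Sym2 V)) : Finset V :=
  univ.filter fun x => ∃ e ∈ M, x ∈ e

/-- The Laplacian matching polynomial of `G`, with coefficients in `R`. -/
noncomputable def LM (R : Type*) [CommRing R] [Fintype V] (G : SimpleGraph V) :
    Polynomial R :=
  ∑ M ∈ matchings G, (-1 : Polynomial R) ^ M.card *
    ∏ v ∈ univ \ covered M, (X - C (deg G v : R))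

/-- `p_r(G)`: the sum of the `r`-th powers of the complex roots of `LM_G`. -/
noncomputable def psum [Fintype V] (G : SimpleGraph V) (r : ℕ) : ℂ :=
  (((LM ℂ G).roots).map (· ^ r)).sum

/-- `A_r(G) = Σ_v d_G(v)^r`. -/
noncomputable def A [Fintype V] (G : SimpleGraph V) (r : ℕ) : ℕ :=
  ∑ v : V, (deg G v) ^ r

/-- `B(G) = Σ_{xy ∈ E(G)} d_G(x) d_G(y)`. -/
noncomputable def B [Fintype V] (G : SimpleGraph V) : ℕ :=
  ∑ e ∈ edges G, Sym2.lift ⟨fun x y => deg G x * deg G y, fun x y => mul_comm _ _⟩ e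

/-- `C(G) = Σ_{xy ∈ E(G)} (d_G(x)^2 d_G(y) + d_G(x) d_G(y)^2)`. -/
noncomputable def Csum [Fintype V] (G : SimpleGraph V) : ℕ :=
  ∑ e ∈ edges G,
    Sym2.lift ⟨fun x y => deg G x ^ 2 * deg G y + deg G x * deg G y ^ 2,
      fun x y => by ring⟩ e

/-- The graph obtained from `G` by adding the edge `uv`. -/
def addEdge (G : SimpleGraph V) (u v : V) : SimpleGraph V :=
  G ⊔ SimpleGraph.fromEdgeSet {s(u, v)}

/-- `S_w = Σ_{x ∈ N_G(w)} d_G(x)`. -/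
noncomputable def Ssum [Fintype V] (G : SimpleGraph V) (w : V) : ℕ :=
  ∑ x ∈ univ.filter fun x => G.Adj w x, deg G x

/-- `T_w = Σ_{x ∈ N_G(w)} d_G(x)^2`. -/
noncomputable def Tsum [Fintype V] (G : SimpleGraph V) (w : V) : ℕ :=
  ∑ x ∈ univ.filter fun x => G.Adj w x, (deg G x) ^ 2

/-- The `r`-th elementary symmetric polynomial of the degree sequence of `G`. -/
noncomputable def esymmDeg [Fintype V] (G : SimpleGraph V) (r : ℕ) : ℕ :=
  ∑ s ∈ univ.powersetCard r, ∏ v ∈ s, deg G v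

/-- `φ_2(G)`: the number of 2-matchings of `G`. -/
noncomputable def phi2 [Fintype V] (G : SimpleGraph V) : ℕ :=
  ((matchings G).filter fun M => M.card = 2).card

/-!
The root multisets of `LM_{G+uv}` and `LM_G` differ only in `λ + 1, μ + 1` versus `λ, μ`, so
the power sums `p_k` of their roots differ by `(λ + 1)^k + (μ + 1)^k - λ^k - μ^k`. On the other
hand, the top four coefficients of `LM_H` only see matchings with at most one edge, and Newton's
identities turn them into `p_2 = Σ d(v)^2 + 2|E|` and `p_3 = Σ d(v)^3 + 3 Σ d(v)^2`. Adding `uv`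
raises `d(u)`, `d(v)` and `|E|` by one, so comparing `p_2` gives `λ + μ = a + b + 1`, and
comparing `p_3` gives `λ^2 + μ^2 = (a + 1)^2 + (b + 1)^2 - 1`, whence `λμ = ab`.
-/

section SymmetricFunctions

variable {R : Type*}

theorem _root_.Multiset.esymm_zero [CommSemiring R] (s : Multiset R) : s.esymm 0 = 1 := by
  simp [Multiset.esymm, Multiset.powersetCard_zero_left]

theorem _root_.Multiset.esymm_cons [CommSemiring R] (x : R) (s : Multiset R) (k : ℕ) :
    (x ::ₘ s).esymm (k + 1) = s.esymm (k + 1) + x * s.esymm k := by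
  simp only [Multiset.esymm, Multiset.powersetCard_cons, Multiset.map_add, Multiset.sum_add,
    Multiset.map_map, Function.comp_def, Multiset.prod_cons, Multiset.sum_map_mul_left]

theorem _root_.Multiset.esymm_one [CommSemiring R] (s : Multiset R) : s.esymm 1 = s.sum := by
  induction s using Multiset.induction with
  | empty => simp [Multiset.esymm, Multiset.powersetCard_zero_right]
  | cons x s ih => rw [Multiset.esymm_cons, ih, Multiset.esymm_zero, Multiset.sum_cons, mul_one,
      add_comm]

theorem _root_.Multiset.sum_map_sq [CommRing R] (s : Multiset R) :
    (s.map (· ^ 2)).sum = s.esymm 1 ^ 2 - 2 * s.esymm 2 := by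
  induction s using Multiset.induction with
  | empty => simp [Multiset.esymm, Multiset.powersetCard_zero_right]
  | cons x s ih =>
    rw [Multiset.esymm_cons, Multiset.esymm_cons, Multiset.esymm_zero, Multiset.map_cons,
      Multiset.sum_cons, ih]
    ring

theorem _root_.Multiset.sum_map_pow_three [CommRing R] (s : Multiset R) :
    (s.map (· ^ 3)).sum = s.esymm 1 ^ 3 - 3 * s.esymm 1 * s.esymm 2 + 3 * s.esymm 3 := by
  induction s using Multiset.induction with
  | empty => simp [Multiset.esymm, Multiset.powersetCard_zero_right]
  | cons x s ih =>
    rw [Multiset.esymm_cons, Multiset.esymm_cons, Multiset.esymm_cons, Multiset.esymm_zero,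
      Multiset.map_cons, Multiset.sum_cons, ih]
    ring

theorem coeff_prod_X_sub_C_card_sub [CommRing R] {ι : Type*} (s : Finset ι) (f : ι → R) {k : ℕ}
    (hk : k ≤ #s) :
    (∏ i ∈ s, (X - C (f i))).coeff (#s - k) = (-1) ^ k * (s.val.map f).esymm k := by
  have h := Multiset.prod_X_sub_C_coeff (s.val.map f) (k := #s - k) (by simp)
  simpa [Multiset.map_map, Function.comp_def, Nat.sub_sub_self hk] using h

theorem _root_.Polynomial.Monic.esymm_roots_eq_coeff [CommRing R] [IsDomain R] {p : R[X]}
    (hp : p.Monic) (hroots : p.roots.card = p.natDegree) {k : ℕ} (hk : k ≤ p.natDegree) :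
    p.roots.esymm k = (-1) ^ k * p.coeff (p.natDegree - k) := by
  rw [coeff_eq_esymm_roots_of_card hroots (Nat.sub_le _ _), hp.leadingCoeff,
    Nat.sub_sub_self hk, one_mul, ← mul_assoc, ← pow_add, ← two_mul, pow_mul, neg_one_sq,
    one_pow, one_mul]

end SymmetricFunctions

section Matchings

variable [Fintype V] {H : SimpleGraph V}

theorem mem_matchings {M : Finset (Sym2 V)} : M ∈ matchings H ↔ IsMatching H M := by
  simp [matchings]

theorem card_covered {M : Finset (Sym2 V)} (hM : IsMatching H M) : #(covered M) = 2 * #M := by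
  have hcov : covered M = M.biUnion fun e => univ.filter (· ∈ e) := by
    ext z; simp [covered]
  rw [hcov, card_biUnion, sum_const_nat, mul_comm]
  · intro e he
    induction e using Sym2.ind with
    | _ x y =>
      have hxy : x ≠ y := (H.mem_edgeSet.mp (hM.1 he)).ne
      have : univ.filter (· ∈ s(x, y)) = {x, y} := by ext; simp
      rw [this, card_pair hxy]
  · intro e he f hf hef
    simp only [disjoint_left, mem_filter]
    exact fun z hz hz' => hM.2 e he f hf hef z hz.2 hz'.2

theorem isMatching_singleton {e : Sym2 V} (he : e ∈ edges H) : IsMatching H {e} :=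
  ⟨by simpa [edges] using he, by simp⟩

theorem two_le_card_of_mem_edges {e : Sym2 V} (he : e ∈ edges H) : 2 ≤ Fintype.card V := by
  simpa [card_covered (isMatching_singleton he)] using card_le_univ (covered {e})

theorem card_compl_covered_singleton {e : Sym2 V} (he : e ∈ edges H) :
    #(univ \ covered {e}) = Fintype.card V - 2 := by
  rw [card_sdiff_of_subset (subset_univ _), card_univ, card_covered (isMatching_singleton he),
    card_singleton]

theorem matchings_filter_card_le_one :
    (matchings H).filter (#· ≤ 1) = insert ∅ ((edges H).image singleton) := by
  ext M
  simp only [mem_filter, mem_insert, mem_image, mem_matchings, Nat.le_one_iff_eq_zero_or_eq_one,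
    card_eq_zero, card_eq_one]
  constructor
  · rintro ⟨hM, rfl | ⟨e, rfl⟩⟩
    · exact Or.inl rfl
    · exact Or.inr ⟨e, by simpa [edges] using hM.1 (mem_singleton_self e), rfl⟩
  · rintro (rfl | ⟨e, he, rfl⟩)
    · exact ⟨⟨by simp, by simp⟩, Or.inl rfl⟩
    · exact ⟨isMatching_singleton he, Or.inr ⟨e, rfl⟩⟩

theorem card_filter_mem_edges (v : V) : #((edges H).filter (v ∈ ·)) = deg H v := by
  have hE : edges H = H.edgeFinset := by ext; simp [edges]
  have hdeg : deg H v = H.degree v := by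
    rw [deg, ← SimpleGraph.card_neighborFinset_eq_degree]; congr 1; ext; simp
  rw [hE, ← H.incidenceFinset_eq_filter, H.card_incidenceFinset_eq_degree, hdeg]

theorem sum_edges_sum_compl_covered {R : Type*} [CommRing R] (f : V → R) :
    ∑ e ∈ edges H, ∑ v ∈ univ \ covered {e}, f v =
      #(edges H) * ∑ v, f v - ∑ v, deg H v * f v := by
  have hcov : ∀ e : Sym2 V, covered {e} = univ.filter (· ∈ e) := fun e => by ext; simp [covered]
  simp only [sum_sdiff_eq_sub (subset_univ _), sum_sub_distrib, sum_const, nsmul_eq_mul, hcov,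
    sum_filter]
  rw [sum_comm]
  simp only [← sum_filter, sum_const, nsmul_eq_mul, card_filter_mem_edges]

/-- A matching with `j` edges contributes in degree `n - 2j`, so only the empty matching and the
single edges reach the top four coefficients. -/
theorem coeff_LM_of_card_sub_three_le (R : Type*) [CommRing R] [Nontrivial R] {k : ℕ}
    (hk : Fintype.card V - 3 ≤ k) :
    (LM R H).coeff k = (∏ v, (X - C (deg H v : R))).coeff k -
      ∑ e ∈ edges H, (∏ v ∈ univ \ covered {e}, (X - C (deg H v : R))).coeff k := by
  have hterm : ∀ M : Finset (Sym2 V), ((-1 : R[X]) ^ #M *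
      ∏ v ∈ univ \ covered M, (X - C (deg H v : R))).coeff k =
        (-1) ^ #M * (∏ v ∈ univ \ covered M, (X - C (deg H v : R))).coeff k := by
    intro M
    rw [← C_1, ← C_neg, ← C_pow, coeff_C_mul]
  have hlarge : ∀ M ∈ (matchings H).filter (¬ #· ≤ 1),
      (-1) ^ #M * (∏ v ∈ univ \ covered M, (X - C (deg H v : R))).coeff k = 0 := by
    intro M hM
    rw [mem_filter, mem_matchings] at hM
    have hcard := card_le_univ (covered M)
    rw [card_covered hM.1] at hcard
    refine mul_eq_zero_of_right _ (coeff_eq_zero_of_natDegree_lt ?_)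
    rw [natDegree_finsetProd_X_sub_C_eq_card, card_sdiff_of_subset (subset_univ _), card_univ,
      card_covered hM.1]
    omega
  rw [LM, finsetSum_coeff, sum_congr rfl fun M _ => hterm M,
    ← sum_filter_add_sum_filter_not _ (#· ≤ 1), sum_eq_zero hlarge, add_zero,
    matchings_filter_card_le_one, sum_insert (by simp), sum_image (by simp)]
  simp [covered, sub_eq_add_neg]

end Matchings

section Coefficients

variable [Fintype V] (R : Type*) [CommRing R] (H : SimpleGraph V)

noncomputable def degreeMultiset : Multiset R :=
  univ.val.map fun v => (deg H v : R)

variable {R}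

theorem sum_map_pow_degreeMultiset (k : ℕ) :
    ((degreeMultiset R H).map (· ^ k)).sum = ∑ v, (deg H v : R) ^ k := by
  rw [degreeMultiset, Multiset.map_map]
  rfl

theorem esymm_one_degreeMultiset : (degreeMultiset R H).esymm 1 = ∑ v, (deg H v : R) := by
  rw [Multiset.esymm_one]
  rfl

theorem coeff_prod_X_sub_C_deg_card_sub {k : ℕ} (hk : k ≤ Fintype.card V) :
    (∏ v, (X - C (deg H v : R))).coeff (Fintype.card V - k) =
      (-1) ^ k * (degreeMultiset R H).esymm k := by
  rw [← card_univ, coeff_prod_X_sub_C_card_sub _ _ (by rwa [card_univ])]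
  rfl

variable [Nontrivial R]

theorem natDegree_LM_le : (LM R H).natDegree ≤ Fintype.card V := by
  refine natDegree_sum_le_of_forall_le _ _ fun M _ => natDegree_mul_le.trans ?_
  rw [← C_1, ← C_neg, ← C_pow, natDegree_C, zero_add, natDegree_finsetProd_X_sub_C_eq_card]
  exact card_le_univ _

theorem coeff_LM_card : (LM R H).coeff (Fintype.card V) = 1 := by
  have hedge : ∀ e ∈ edges H,
      (∏ v ∈ univ \ covered {e}, (X - C (deg H v : R))).coeff (Fintype.card V) = 0 := by
    intro e he
    have := two_le_card_of_mem_edges he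
    apply coeff_eq_zero_of_natDegree_lt
    rw [natDegree_finsetProd_X_sub_C_eq_card, card_compl_covered_singleton he]
    omega
  rw [coeff_LM_of_card_sub_three_le R (by omega), sum_eq_zero hedge, sub_zero, ← card_univ,
    ← natDegree_finsetProd_X_sub_C_eq_card univ fun v => (deg H v : R),
    (monic_prod_X_sub_C _ _).coeff_natDegree]

theorem monic_LM : (LM R H).Monic :=
  monic_of_natDegree_le_of_coeff_eq_one _ (natDegree_LM_le H) (coeff_LM_card H)

theorem natDegree_LM : (LM R H).natDegree = Fintype.card V :=
  (natDegree_LM_le H).antisymm (le_natDegree_of_ne_zero (by simp [coeff_LM_card]))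

end Coefficients

section Roots

variable [Fintype V] {R : Type*} [CommRing R] [IsDomain R] {H : SimpleGraph V}

theorem esymm_roots_LM (hroots : (LM R H).roots.card = Fintype.card V) {k : ℕ} (hk3 : k ≤ 3)
    (hkn : k ≤ Fintype.card V) :
    (LM R H).roots.esymm k = (degreeMultiset R H).esymm k - (-1) ^ k *
      ∑ e ∈ edges H,
        (∏ v ∈ univ \ covered {e}, (X - C (deg H v : R))).coeff (Fintype.card V - k) := by
  rw [(monic_LM H).esymm_roots_eq_coeff (by rwa [natDegree_LM]) (by rwa [natDegree_LM]),
    natDegree_LM, coeff_LM_of_card_sub_three_le R (by omega),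
    coeff_prod_X_sub_C_deg_card_sub H hkn, mul_sub, ← mul_assoc, ← pow_add, ← two_mul, pow_mul,
    neg_one_sq, one_pow, one_mul]

theorem esymm_one_roots_LM (hroots : (LM R H).roots.card = Fintype.card V)
    (hn : 1 ≤ Fintype.card V) :
    (LM R H).roots.esymm 1 = ∑ v, (deg H v : R) := by
  have hedge : ∀ e ∈ edges H, (∏ v ∈ univ \ covered {e}, (X - C (deg H v : R))).coeff
      (Fintype.card V - 1) = 0 := by
    intro e he
    have := two_le_card_of_mem_edges he
    apply coeff_eq_zero_of_natDegree_lt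
    rw [natDegree_finsetProd_X_sub_C_eq_card, card_compl_covered_singleton he]
    omega
  rw [esymm_roots_LM hroots (by norm_num) hn, sum_eq_zero hedge, mul_zero, sub_zero,
    esymm_one_degreeMultiset]

theorem esymm_two_roots_LM (hroots : (LM R H).roots.card = Fintype.card V)
    (hn : 2 ≤ Fintype.card V) :
    (LM R H).roots.esymm 2 = (degreeMultiset R H).esymm 2 - #(edges H) := by
  have hedge : ∀ e ∈ edges H, (∏ v ∈ univ \ covered {e}, (X - C (deg H v : R))).coeff
      (Fintype.card V - 2) = 1 := by
    intro e he
    rw [← card_compl_covered_singleton he, ← Nat.sub_zero #_,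
      coeff_prod_X_sub_C_card_sub _ _ (Nat.zero_le _), pow_zero, Multiset.esymm_zero, one_mul]
  rw [esymm_roots_LM hroots (by norm_num) hn, sum_congr rfl hedge]
  simp

theorem esymm_three_roots_LM (hroots : (LM R H).roots.card = Fintype.card V)
    (hn : 3 ≤ Fintype.card V) :
    (LM R H).roots.esymm 3 = (degreeMultiset R H).esymm 3 -
      #(edges H) * ∑ v, (deg H v : R) + ∑ v, (deg H v : R) ^ 2 := by
  have hedge : ∀ e ∈ edges H, (∏ v ∈ univ \ covered {e}, (X - C (deg H v : R))).coeff
      (Fintype.card V - 3) = -∑ v ∈ univ \ covered {e}, (deg H v : R) := by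
    intro e he
    have hcard := card_compl_covered_singleton he
    rw [show Fintype.card V - 3 = #(univ \ covered {e}) - 1 by omega,
      coeff_prod_X_sub_C_card_sub _ _ (by omega), Multiset.esymm_one, pow_one, neg_one_mul]
    rfl
  rw [esymm_roots_LM hroots (by norm_num) hn, sum_congr rfl hedge, sum_neg_distrib,
    sum_edges_sum_compl_covered]
  simp only [sq]
  ring

theorem sum_map_sq_roots_LM (hroots : (LM R H).roots.card = Fintype.card V)
    (hn : 2 ≤ Fintype.card V) :
    ((LM R H).roots.map (· ^ 2)).sum = ∑ v, (deg H v : R) ^ 2 + 2 * #(edges H) := by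
  rw [Multiset.sum_map_sq, esymm_one_roots_LM hroots (by omega), esymm_two_roots_LM hroots hn,
    ← sum_map_pow_degreeMultiset H 2, Multiset.sum_map_sq, esymm_one_degreeMultiset]
  ring

theorem sum_map_pow_three_roots_LM (hroots : (LM R H).roots.card = Fintype.card V)
    (hn : 3 ≤ Fintype.card V) :
    ((LM R H).roots.map (· ^ 3)).sum = ∑ v, (deg H v : R) ^ 3 + 3 * ∑ v, (deg H v : R) ^ 2 := by
  rw [Multiset.sum_map_pow_three, esymm_one_roots_LM hroots (by omega),
    esymm_two_roots_LM hroots (by omega), esymm_three_roots_LM hroots hn,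
    ← sum_map_pow_degreeMultiset H 3, Multiset.sum_map_pow_three, esymm_one_degreeMultiset]
  ring

end Roots

section AddEdge

variable {G : SimpleGraph V} {u v : V}

theorem addEdge_adj {x y : V} :
    (addEdge G u v).Adj x y ↔ G.Adj x y ∨ (s(x, y) = s(u, v) ∧ x ≠ y) := by
  simp [addEdge]

theorem addEdge_comm : addEdge G u v = addEdge G v u := by
  rw [addEdge, addEdge, Sym2.eq_swap]

variable [Fintype V]

theorem card_edges_addEdge (huv : u ≠ v) (hne : ¬ G.Adj u v) :
    #(edges (addEdge G u v)) = #(edges G) + 1 := by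
  have : edges (addEdge G u v) = insert s(u, v) (edges G) := by
    ext e
    induction e using Sym2.ind with
    | _ x y =>
      simp only [edges, mem_filter, mem_univ, true_and, mem_insert, SimpleGraph.mem_edgeSet,
        addEdge_adj]
      grind [G.ne_of_adj]
  rw [this, card_insert_of_notMem (by simpa [edges] using hne)]

theorem deg_addEdge_left (huv : u ≠ v) (hne : ¬ G.Adj u v) :
    deg (addEdge G u v) u = deg G u + 1 := by
  have : univ.filter (fun w => (addEdge G u v).Adj u w) =
      insert v (univ.filter fun w => G.Adj u w) := by
    ext w
    simp only [mem_filter, mem_univ, true_and, mem_insert, addEdge_adj]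
    grind
  rw [deg, this, card_insert_of_notMem (by simpa using hne), deg]

theorem deg_addEdge_right (huv : u ≠ v) (hne : ¬ G.Adj u v) :
    deg (addEdge G u v) v = deg G v + 1 := by
  rw [addEdge_comm, deg_addEdge_left huv.symm (fun h => hne h.symm)]

theorem deg_addEdge_of_ne {w : V} (hwu : w ≠ u) (hwv : w ≠ v) :
    deg (addEdge G u v) w = deg G w := by
  simp only [deg, addEdge_adj]
  congr 1
  ext x
  simp [hwu, hwv]

theorem sum_deg_pow_addEdge {R : Type*} [CommRing R] (huv : u ≠ v) (hne : ¬ G.Adj u v)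
    (k : ℕ) :
    ∑ w, (deg (addEdge G u v) w : R) ^ k = ∑ w, (deg G w : R) ^ k +
      (((deg G u + 1 : R) ^ k - (deg G u : R) ^ k) +
        ((deg G v + 1 : R) ^ k - (deg G v : R) ^ k)) := by
  rw [← sub_eq_iff_eq_add', ← sum_sub_distrib, Fintype.sum_eq_add u v huv,
    deg_addEdge_left huv hne, deg_addEdge_right huv hne]
  · push_cast; ring
  · rintro w ⟨hwu, hwv⟩
    rw [deg_addEdge_of_ne hwu hwv, sub_self]

end AddEdge

theorem three_le_card_of_connected [Fintype V] {G : SimpleGraph V} (hconn : G.Connected) {u v : V}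
    (huv : u ≠ v) (hne : ¬ G.Adj u v) : 3 ≤ Fintype.card V := by
  obtain ⟨p⟩ := hconn.preconnected u v
  have hadj : G.Adj u (p.getVert 1) := p.adj_snd (p.not_nil_of_ne huv)
  have hw : p.getVert 1 ≠ v := fun h => hne (h ▸ hadj)
  calc 3 = #{u, v, p.getVert 1} := (card_eq_three.mpr ⟨u, v, _, huv, hadj.ne, hw.symm, rfl⟩).symm
    _ ≤ Fintype.card V := card_le_univ _

theorem lemma_sum_prod_general [Fintype V] (G : SimpleGraph V) (hconn : G.Connected)
    (u v : V) (huv : u ≠ v) (hne : ¬ G.Adj u v)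
    (hreal : ((LM ℝ G).roots).card = Fintype.card V)
    (hreal' : ((LM ℝ (addEdge G u v)).roots).card = Fintype.card V)
    (lam mu : ℝ)
    (hlam : lam ∈ (LM ℝ G).roots)
    (hmu : mu ∈ ((LM ℝ G).roots).erase lam)
    (heq : (LM ℝ (addEdge G u v)).roots =
      ((((LM ℝ G).roots).erase lam).erase mu) + {lam + 1, mu + 1}) :
    lam + mu = (deg G u : ℝ) + (deg G v : ℝ) + 1 ∧
      lam * mu = (deg G u : ℝ) * (deg G v : ℝ) := by
  have hn := three_le_card_of_connected hconn huv hne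
  set rest := ((LM ℝ G).roots.erase lam).erase mu with hrest
  have hroots : (LM ℝ G).roots = lam ::ₘ mu ::ₘ rest := by
    rw [hrest, Multiset.cons_erase hmu, Multiset.cons_erase hlam]
  have hshift : ∀ k : ℕ, ((LM ℝ (addEdge G u v)).roots.map (· ^ k)).sum =
      ((LM ℝ G).roots.map (· ^ k)).sum + ((lam + 1) ^ k - lam ^ k) + ((mu + 1) ^ k - mu ^ k) := by
    intro k
    rw [heq, hroots]
    simp only [Multiset.map_add, Multiset.map_cons, Multiset.sum_add, Multiset.sum_cons,
      Multiset.insert_eq_cons, Multiset.map_singleton, Multiset.sum_singleton]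
    ring
  have h2 := hshift 2
  have h3 := hshift 3
  rw [sum_map_sq_roots_LM hreal' (by omega), sum_map_sq_roots_LM hreal (by omega),
    sum_deg_pow_addEdge huv hne, card_edges_addEdge huv hne] at h2
  rw [sum_map_pow_three_roots_LM hreal' hn, sum_map_pow_three_roots_LM hreal hn,
    sum_deg_pow_addEdge huv hne, sum_deg_pow_addEdge huv hne] at h3
  have hsum : lam + mu = (deg G u : ℝ) + (deg G v : ℝ) + 1 := by
    push_cast at h2
    linear_combination (-1 / 2 : ℝ) * h2
  refine ⟨hsum, ?_⟩
  linear_combination (1 / 6 : ℝ) * h3 + ((lam + mu + deg G u + deg G v + 2) / 2) * hsum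

/-- If two-place LMRIV occurs for a connected graph `G` when the non-edge `uv` is added,
with changed roots `lam` (the largest root of `LM_G`) and `mu`, then
`lam + mu = a + b + 1` and `lam * mu = a * b`, where `a = d_G(u)`, `b = d_G(v)`.
The hypothesis that all roots of `LM_G` and of `LM_{G+uv}` are real is expressed by
saying that the multisets of real roots have full cardinality `n = |V(G)|`. -/
theorem lemma_sum_prod [Fintype V] (G : SimpleGraph V) (hconn : G.Connected)
    (u v : V) (huv : u ≠ v) (hne : ¬ G.Adj u v)
    (hreal : ((LM ℝ G).roots).card = Fintype.card V)
    (hreal' : ((LM ℝ (addEdge G u v)).roots).card = Fintype.card V)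
    (lam mu : ℝ)
    (hlam : lam ∈ (LM ℝ G).roots)
    (hmax : ∀ r ∈ (LM ℝ G).roots, r ≤ lam)
    (hmu : mu ∈ ((LM ℝ G).roots).erase lam)
    (heq : (LM ℝ (addEdge G u v)).roots =
      ((((LM ℝ G).roots).erase lam).erase mu) + {lam + 1, mu + 1}) :
    lam + mu = (deg G u : ℝ) + (deg G v : ℝ) + 1 ∧
      lam * mu = (deg G u : ℝ) * (deg G v : ℝ) :=
  lemma_sum_prod_general G hconn u v huv hne hreal hreal' lam mu hlam hmu heq

end LMRIV
end

section
/- Let G be a finite simple graph with m edges. Then Σ_{M∈M_2(G)} Σ_{z∈V(M)} d_G(z) = (m+1)·A_2(G) − A_3(G) − 2·B(G), where M_2(G) is the set of 2-matchings of G; equivalently, Σ_{xy∈E(G)} (d_G(x)+d_G(y))·(m − d_G(x) − d_G(y) + 1) = (m+1)·A_2(G) − A_3(G) − 2·B(G). -/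
open Polynomial Finset

namespace LMRIV

open scoped Classical

variable {V : Type*}

/-! Writing `D(e) = d(x) + d(y)` for an edge `e = xy`, a 2-matching `{e, f}` contributes
`D(e) + D(f)` to the left-hand side, so exchanging the order of summation counts each edge `e`
once for every edge disjoint from it. By inclusion–exclusion (the edges through `x` and those
through `y` share only `xy`) there are `m + 1 - d(x) - d(y)` of these, which gives the edge-sum
form. Expanding `D(e)(m + 1 - D(e))` and applying the weighted handshake identity
`Σ_{e ∈ E} Σ_{v ∈ e} w(v) = Σ_v d(v) w(v)` to `w = d` and `w = d²` yields `(m+1) A_2 - A_3 - 2B`. -/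

lemma ne_of_forall_notMem {e f : Sym2 V} (hef : ∀ z ∈ e, z ∉ f) : e ≠ f := by
  rintro rfl
  exact hef _ (Sym2.out_fst_mem e) (Sym2.out_fst_mem e)

lemma isMatching_pair {G : SimpleGraph V} {e f : Sym2 V} (he : e ∈ G.edgeSet)
    (hf : f ∈ G.edgeSet) (hef : ∀ z ∈ e, z ∉ f) : IsMatching G {e, f} := by
  refine ⟨by simp [Set.insert_subset_iff, he, hf], ?_⟩
  simp only [mem_insert, mem_singleton]
  rintro a (rfl | rfl) b (rfl | rfl) hab z hza
  · exact absurd rfl hab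
  · exact hef z hza
  · exact fun hzb => hef z hzb hza
  · exact absurd rfl hab

section

variable [Fintype V]

lemma sum_edgeFinset_sum_toFinset {β : Type*} [AddCommMonoid β] (G : SimpleGraph V)
    (w : V → β) : ∑ e ∈ G.edgeFinset, ∑ v ∈ e.toFinset, w v = ∑ v, G.degree v • w v := by
  rw [sum_comm' (s' := fun v => G.incidenceFinset v) (t' := univ)]
  · simp [← SimpleGraph.card_incidenceFinset_eq_degree]
  · intro e v
    simp [SimpleGraph.incidenceFinset_eq_filter]

lemma card_filter_notMem_add_degree_add_degree (G : SimpleGraph V) {x y : V} (h : G.Adj x y) :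
    #{f ∈ G.edgeFinset | x ∉ f ∧ y ∉ f} + G.degree x + G.degree y = #G.edgeFinset + 1 := by
  have hinter : G.incidenceFinset x ∩ G.incidenceFinset y = {s(x, y)} := by
    rw [← coe_inj]; push_cast
    exact G.incidenceSet_inter_incidenceSet_of_adj h
  have hcompl : {f ∈ G.edgeFinset | ¬(x ∉ f ∧ y ∉ f)} =
      G.incidenceFinset x ∪ G.incidenceFinset y := by
    ext f; simp only [mem_filter, mem_union, SimpleGraph.incidenceFinset_eq_filter]; tauto
  have hsplit := card_filter_add_card_filter_not (s := G.edgeFinset) (p := fun f => x ∉ f ∧ y ∉ f)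
  have hunion := card_union_add_card_inter (G.incidenceFinset x) (G.incidenceFinset y)
  rw [hcompl] at hsplit
  rw [hinter, card_singleton, SimpleGraph.card_incidenceFinset_eq_degree,
    SimpleGraph.card_incidenceFinset_eq_degree] at hunion
  omega

lemma edges_eq_edgeFinset (G : SimpleGraph V) : edges G = G.edgeFinset := by
  ext e; simp [edges]

lemma deg_eq_degree (G : SimpleGraph V) (v : V) : deg G v = G.degree v := by
  rw [deg, ← SimpleGraph.card_neighborFinset_eq_degree]
  congr 1; ext w; simp

lemma sum_edges_sum_toFinset {β : Type*} [AddCommMonoid β] (G : SimpleGraph V) (w : V → β) :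
    ∑ e ∈ edges G, ∑ v ∈ e.toFinset, w v = ∑ v, deg G v • w v := by
  simp only [edges_eq_edgeFinset, deg_eq_degree, sum_edgeFinset_sum_toFinset]

lemma card_filter_disjoint_edges (G : SimpleGraph V) {x y : V} (h : G.Adj x y) :
    (#{f ∈ edges G | ∀ z ∈ s(x, y), z ∉ f} : ℤ) = #(edges G) + 1 - deg G x - deg G y := by
  have := card_filter_notMem_add_degree_add_degree G h
  simp only [Sym2.mem_iff, forall_eq_or_imp, forall_eq, edges_eq_edgeFinset, deg_eq_degree]
  omega

lemma covered_eq_biUnion (M : Finset (Sym2 V)) : covered M = M.biUnion Sym2.toFinset := by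
  ext; simp [covered]

lemma IsMatching.sum_covered {β : Type*} [AddCommMonoid β] {G : SimpleGraph V}
    {M : Finset (Sym2 V)} (hM : IsMatching G M) (w : V → β) :
    ∑ z ∈ covered M, w z = ∑ e ∈ M, ∑ z ∈ e.toFinset, w z := by
  rw [covered_eq_biUnion, sum_biUnion]
  intro e he f hf hef
  simpa [Function.onFun, disjoint_left] using hM.2 e he f hf hef

lemma card_filter_mem_twoMatchings (G : SimpleGraph V) {e : Sym2 V} (he : e ∈ edges G) :
    #{M ∈ (matchings G).filter (fun M => M.card = 2) | e ∈ M} =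
      #{f ∈ edges G | ∀ z ∈ e, z ∉ f} := by
  symm
  refine card_bij (fun f _ => {e, f}) ?_ ?_ ?_
  · intro f hf
    simp only [mem_filter, edges, mem_univ, true_and] at he hf
    have hne := ne_of_forall_notMem hf.2
    simp [matchings, isMatching_pair he hf.1 hf.2, card_pair hne]
  · intro f₁ hf₁ f₂ hf₂ h
    simp only [mem_filter] at hf₁ hf₂
    have : f₁ ∈ ({e, f₂} : Finset (Sym2 V)) := h ▸ mem_insert_of_mem (mem_singleton_self f₁)
    simpa [(ne_of_forall_notMem hf₁.2).symm] using this
  · intro M hM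
    simp only [matchings, mem_filter, mem_univ, true_and] at hM
    obtain ⟨⟨hmatch, hcard⟩, heM⟩ := hM
    obtain ⟨f, hf⟩ := card_eq_one.mp (by rw [card_erase_of_mem heM, hcard] : #(M.erase e) = 1)
    have hfM : f ∈ M := mem_of_mem_erase (hf ▸ mem_singleton_self f)
    have hfe : f ≠ e := ne_of_mem_erase (hf ▸ mem_singleton_self f)
    refine ⟨f, ?_, ?_⟩
    · simpa [edges, hmatch.1 hfM] using hmatch.2 e heM f hfM hfe.symm
    · rw [← hf, insert_erase heM]

lemma sum_twoMatchings_sum_covered {β : Type*} [AddCommMonoid β] (G : SimpleGraph V)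
    (w : V → β) :
    ∑ M ∈ (matchings G).filter (fun M => M.card = 2), ∑ z ∈ covered M, w z =
      ∑ e ∈ edges G, #{f ∈ edges G | ∀ z ∈ e, z ∉ f} • ∑ z ∈ e.toFinset, w z := by
  have hmatch : ∀ M ∈ (matchings G).filter (fun M => M.card = 2), IsMatching G M := by
    intro M hM; simpa [matchings] using (mem_filter.mp hM).1
  rw [sum_congr rfl fun M hM => (hmatch M hM).sum_covered w,
    sum_comm' (t' := edges G)
      (s' := fun e => ((matchings G).filter (fun M => M.card = 2)).filter (e ∈ ·))]
  · exact sum_congr rfl fun e he => by rw [sum_const, card_filter_mem_twoMatchings G he]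
  · intro M e
    simp only [mem_filter]
    refine ⟨fun ⟨hM, heM⟩ => ⟨⟨hM, heM⟩, ?_⟩, fun h => h.1⟩
    simpa [edges] using (hmatch M (mem_filter.mpr hM)).1 heM

lemma sum_edges_degree_weight_eq (G : SimpleGraph V) :
    (∑ e ∈ edges G,
        Sym2.lift ⟨fun x y => ((deg G x : ℤ) + (deg G y : ℤ)) *
            (((edges G).card : ℤ) - (deg G x : ℤ) - (deg G y : ℤ) + 1),
          fun x y => by ring⟩ e) =
      (((edges G).card : ℤ) + 1) * (A G 2 : ℤ) - (A G 3 : ℤ) - 2 * (B G : ℤ) := by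
  set m : ℤ := ((edges G).card : ℤ)
  let prod : Sym2 V → ℤ := Sym2.lift ⟨fun x y => (deg G x : ℤ) * deg G y, fun _ _ => mul_comm _ _⟩
  have hB : (B G : ℤ) = ∑ e ∈ edges G, prod e := by
    rw [B, Nat.cast_sum]
    refine sum_congr rfl fun e _ => ?_
    induction e with
    | _ x y => simp [prod]
  have hA : ∀ k, (A G (k + 1) : ℤ) = ∑ v, deg G v • (deg G v : ℤ) ^ k := fun k => by
    simp [A, pow_succ']
  have hterm : ∀ e ∈ edges G,
      Sym2.lift ⟨fun x y => ((deg G x : ℤ) + (deg G y : ℤ)) *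
          (m - (deg G x : ℤ) - (deg G y : ℤ) + 1), fun x y => by ring⟩ e =
        (m + 1) * ∑ v ∈ e.toFinset, (deg G v : ℤ) ^ 1 - ∑ v ∈ e.toFinset, (deg G v : ℤ) ^ 2
          - 2 * prod e := by
    intro e he
    induction e with
    | _ x y =>
      have hxy : x ≠ y := (by simpa [edges] using he : G.Adj x y).ne
      simp only [Sym2.toFinset_mk_eq, sum_pair hxy, Sym2.lift_mk, prod]
      ring
  rw [sum_congr rfl hterm, sum_sub_distrib, sum_sub_distrib, ← mul_sum, ← mul_sum, hB,
    sum_edges_sum_toFinset, sum_edges_sum_toFinset, hA, hA]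

end

/-- `Σ_{M ∈ M_2(G)} Σ_{z ∈ V(M)} d_G(z) = (m+1) A_2 - A_3 - 2B`; equivalently,
`Σ_{xy ∈ E(G)} (d(x)+d(y))(m - d(x) - d(y) + 1) = (m+1) A_2 - A_3 - 2B`. -/
theorem two_matching_degree_sum [Fintype V] (G : SimpleGraph V) :
    (∑ M ∈ (matchings G).filter (fun M => M.card = 2),
        ∑ z ∈ covered M, (deg G z : ℤ)) =
      (((edges G).card : ℤ) + 1) * (A G 2 : ℤ) - (A G 3 : ℤ) - 2 * (B G : ℤ) ∧
    (∑ e ∈ edges G,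
        Sym2.lift ⟨fun x y => ((deg G x : ℤ) + (deg G y : ℤ)) *
            (((edges G).card : ℤ) - (deg G x : ℤ) - (deg G y : ℤ) + 1),
          fun x y => by ring⟩ e) =
      (((edges G).card : ℤ) + 1) * (A G 2 : ℤ) - (A G 3 : ℤ) - 2 * (B G : ℤ) := by
  have edge_form := sum_edges_degree_weight_eq G
  refine ⟨?_, edge_form⟩
  rw [← edge_form, sum_twoMatchings_sum_covered]
  refine sum_congr rfl fun e he => ?_
  induction e with
  | _ x y =>
    have hxy : G.Adj x y := by simpa [edges] using he
    rw [nsmul_eq_mul, card_filter_disjoint_edges G hxy, Sym2.toFinset_mk_eq, sum_pair hxy.ne,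
      Sym2.lift_mk]
    ring

end LMRIV
end
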